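/- For every integer j ≥ 1, setting m = 2 + ⌊3j/(p−1)⌋, if j ≠ ⌈(m−2)(p−1)/3⌉ then the lead monomial (graded reverse lexicographic order with a0 < a1 < a2 < a3) of tr_B^G(N^j · tr^P(a3^{p−2} a2^{(m−1)(p−1)+3−3j})) equals a3^{pj} a2^{m(p−1)+1−3j} a1. -/
import Mathlib


open MvPolynomial

noncomputable section

/-- The right action of the 2×2 matrix `g` over `F_p` on `F[V] = F[a₃,a₂,a₁,a₀]`
(with `aᵢ = X i`), given by the dual of the third symmetric power representation. -/
def act (p : ℕ) [Fact p.Prime] (F : Type) [Field F] [CharP F p]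
    (g : Matrix (Fin 2) (Fin 2) (ZMod p)) :
    MvPolynomial (Fin 4) F →ₐ[F] MvPolynomial (Fin 4) F :=
  letI c : ZMod p → MvPolynomial (Fin 4) F := fun x => C (ZMod.castHom (dvd_refl p) F x)
  letI al := c (g 0 0)
  letI be := c (g 0 1)
  letI ga := c (g 1 0)
  letI de := c (g 1 1)
  aeval ![
    de ^ 3 * X 0 + 3 * de ^ 2 * ga * X 1 + 3 * de * ga ^ 2 * X 2 + ga ^ 3 * X 3,
    de ^ 2 * be * X 0 + (de ^ 2 * al + 2 * de * be * ga) * X 1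
      + (2 * de * ga * al + be * ga ^ 2) * X 2 + ga ^ 2 * al * X 3,
    de * be ^ 2 * X 0 + (2 * de * be * al + be ^ 2 * ga) * X 1
      + (de * al ^ 2 + 2 * be * ga * al) * X 2 + ga * al ^ 2 * X 3,
    be ^ 3 * X 0 + 3 * be ^ 2 * al * X 1 + 3 * be * al ^ 2 * X 2 + al ^ 3 * X 3]

/-- The transfer with respect to the Sylow `p`-subgroup `P = ⟨σ⟩`,
`tr^P(f) = ∑_{τ ∈ P} (f)τ`, where the elements of `P` are the matrices `[[1,s],[0,1]]`. -/
def trP (p : ℕ) [Fact p.Prime] (F : Type) [Field F] [CharP F p]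
    (f : MvPolynomial (Fin 4) F) : MvPolynomial (Fin 4) F :=
  ∑ s : ZMod p, act p F !![1, s; 0, 1] f

/-- The relative transfer `tr_B^G(f) = ∑_{τ ∈ Q ∪ {η}} (f)τ`, using the coset
representatives `Q ∪ {η}` of the Borel subgroup `B` in `G = SL₂(F_p)`. -/
def trBG (p : ℕ) [Fact p.Prime] (F : Type) [Field F] [CharP F p]
    (f : MvPolynomial (Fin 4) F) : MvPolynomial (Fin 4) F :=
  (∑ s : ZMod p, act p F !![1, 0; s, 1] f) + act p F !![0, 1; -1, 0] f

/-- The full transfer `tr^G(f) = ∑_{τ ∈ SL₂(F_p)} (f)τ`. -/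
def trG (p : ℕ) [Fact p.Prime] (F : Type) [Field F] [CharP F p]
    (f : MvPolynomial (Fin 4) F) : MvPolynomial (Fin 4) F :=
  ∑ g : Matrix.SpecialLinearGroup (Fin 2) (ZMod p), act p F g.1 f

/-- `N = ∏_{τ ∈ P} (a₃)τ = ∏_{s ∈ F_p} (a₃ + 3s a₂ + 3s² a₁ + s³ a₀)`. -/
def Npoly (p : ℕ) [Fact p.Prime] (F : Type) [Field F] [CharP F p] :
    MvPolynomial (Fin 4) F :=
  ∏ s : ZMod p, act p F !![1, s; 0, 1] (X 3)

/-- The weight of the monomial `a₃^e₃ a₂^e₂ a₁^e₁ a₀^e₀`, i.e. `3e₃ + e₂ - e₁ - 3e₀`. -/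
def wt (d : Fin 4 →₀ ℕ) : ℤ :=
  3 * (d 3 : ℤ) + (d 2 : ℤ) - (d 1 : ℤ) - 3 * (d 0 : ℤ)

/-- `f` is isobaric of weight `lam` modulo `p - 1`: every monomial occurring in `f`
has weight congruent to `lam` modulo `p - 1`. -/
def Isobaric (p : ℕ) {F : Type} [Field F] (f : MvPolynomial (Fin 4) F) (lam : ℤ) : Prop :=
  ∀ d ∈ f.support, ((p : ℤ) - 1) ∣ (wt d - lam)

/-- Strict grevlex comparison on exponent vectors, for the graded reverse
lexicographic order with `a₀ < a₁ < a₂ < a₃`. -/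
def grevlexLt (d e : Fin 4 →₀ ℕ) : Prop :=
  (∑ i : Fin 4, d i) < (∑ i : Fin 4, e i) ∨
    ((∑ i : Fin 4, d i) = (∑ i : Fin 4, e i) ∧
      ∃ k : Fin 4, e k < d k ∧ ∀ j : Fin 4, j < k → d j = e j)

/-- `d` is the lead monomial of `f` in the grevlex order with `a₀ < a₁ < a₂ < a₃`. -/
def LeadMonomialIs {F : Type} [Field F] (f : MvPolynomial (Fin 4) F) (d : Fin 4 →₀ ℕ) : Prop :=
  coeff d f ≠ 0 ∧ ∀ e ∈ f.support, e ≠ d → grevlexLt e d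

/-- The lead term of `f` is `c · x^d` in the grevlex order with `a₀ < a₁ < a₂ < a₃`. -/
def LeadTermIs {F : Type} [Field F] (f : MvPolynomial (Fin 4) F) (c : F) (d : Fin 4 →₀ ℕ) :
    Prop :=
  LeadMonomialIs f d ∧ coeff d f = c

/-- The discriminant `D` of the binary cubic. -/
def Dpoly (F : Type) [Field F] : MvPolynomial (Fin 4) F :=
  3 * X 2 ^ 2 * X 1 ^ 2 - 4 * X 3 * X 1 ^ 3 - 4 * X 2 ^ 3 * X 0
    + 6 * X 3 * X 2 * X 1 * X 0 - X 3 ^ 2 * X 0 ^ 2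

/-- `K = -tr^G(a₁^{p-1})`. -/
def Kpoly (p : ℕ) [Fact p.Prime] (F : Type) [Field F] [CharP F p] :
    MvPolynomial (Fin 4) F :=
  - trG p F (X 1 ^ (p - 1))

/-- Dickson's invariant `L = 3(a₂^p a₁ - a₂ a₁^p) - (a₃^p a₀ - a₃ a₀^p)`. -/
def Lpoly (p : ℕ) (F : Type) [Field F] : MvPolynomial (Fin 4) F :=
  3 * (X 2 ^ p * X 1 - X 2 * X 1 ^ p) - (X 3 ^ p * X 0 - X 3 * X 0 ^ p)

/-- `e = 2a₁³ + a₀(a₃a₀ - 3a₂a₁)`. -/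
def epoly (F : Type) [Field F] : MvPolynomial (Fin 4) F :=
  2 * X 1 ^ 3 + X 0 * (X 3 * X 0 - 3 * X 2 * X 1)

/-- `d = a₁² - a₂a₀`. -/
def dpoly (F : Type) [Field F] : MvPolynomial (Fin 4) F :=
  X 1 ^ 2 - X 2 * X 0

/-- `ξ = 3a₂² - 4a₃a₁`. -/
def xipoly (F : Type) [Field F] : MvPolynomial (Fin 4) F :=
  3 * X 2 ^ 2 - 4 * X 3 * X 1

/-- The ring of `SL₂(F_p)`-invariants `F[V]^{SL₂(F_p)}`, as a subalgebra of `F[V]`. -/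
def invariants (p : ℕ) [Fact p.Prime] (F : Type) [Field F] [CharP F p] :
    Subalgebra F (MvPolynomial (Fin 4) F) where
  carrier := {f | ∀ g : Matrix.SpecialLinearGroup (Fin 2) (ZMod p), act p F g.1 f = f}
  mul_mem' := fun hf hg g => by rw [map_mul, hf g, hg g]
  one_mem' := fun g => map_one _
  add_mem' := fun hf hg g => by rw [map_add, hf g, hg g]
  zero_mem' := fun g => map_zero _
  algebraMap_mem' := fun c g => (act _ _ _).commutes c

variable (p : ℕ) [Fact p.Prime] (F : Type) [Field F] [CharP F p]

lemma act_U_X3 (t : ZMod p) : act p F !![1, t; 0, 1] (X 3) =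
    C ((ZMod.castHom (dvd_refl p) F) t) ^ 3 * X 0
      + 3 * C ((ZMod.castHom (dvd_refl p) F) t) ^ 2 * X 1
      + 3 * C ((ZMod.castHom (dvd_refl p) F) t) * X 2 + X 3 := by
  simp [act]

lemma act_U_X2 (t : ZMod p) : act p F !![1, t; 0, 1] (X 2) =
    C ((ZMod.castHom (dvd_refl p) F) t) ^ 2 * X 0
      + 2 * C ((ZMod.castHom (dvd_refl p) F) t) * X 1 + X 2 := by
  simp [act]

lemma act_id (f : MvPolynomial (Fin 4) F) : act p F !![1, 0; 0, 1] f = f := by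
  have : act p F !![1, 0; 0, 1] = aeval X := by
    unfold act
    congr 1
    funext i
    fin_cases i <;> simp
  rw [this]
  exact aeval_X_left_apply f

lemma act_eta_X3 : act p F !![0, 1; -1, 0] (X 3) = X 0 := by
  simp [act]

-- composite for divisibility: act(L_s)(act(U_t)X3) in general
lemma act_L_U (s t : ZMod p) :
    act p F !![1, 0; s, 1] (act p F !![1, t; 0, 1] (X 3)) =
      C ((ZMod.castHom (dvd_refl p) F) t) ^ 3 * X 0
      + 3 * C ((ZMod.castHom (dvd_refl p) F) t) ^ 2
          * (1 + C ((ZMod.castHom (dvd_refl p) F) t) * C ((ZMod.castHom (dvd_refl p) F) s)) * X 1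
      + 3 * C ((ZMod.castHom (dvd_refl p) F) t)
          * (1 + C ((ZMod.castHom (dvd_refl p) F) t) * C ((ZMod.castHom (dvd_refl p) F) s)) ^ 2 * X 2
      + (1 + C ((ZMod.castHom (dvd_refl p) F) t) * C ((ZMod.castHom (dvd_refl p) F) s)) ^ 3 * X 3 := by
  rw [act_U_X3]
  simp [act, map_ofNat]
  ring

lemma zmod_sum_pow (k : ℕ) (hk : k ≤ p - 1) :
    (∑ t : ZMod p, t ^ k) = if k = p - 1 then (-1 : ZMod p) else 0 := by
  have hp : p.Prime := Fact.out
  split_ifs with h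
  · subst h
    have h0 : (0 : ZMod p) ^ (p - 1) = 0 := by
      apply zero_pow; have := hp.two_le; omega
    rw [← Finset.sum_erase_add _ _ (Finset.mem_univ (0 : ZMod p)), h0, add_zero]
    have : ∀ t ∈ Finset.univ.erase (0 : ZMod p), t ^ (p - 1) = 1 := by
      intro t ht
      exact ZMod.pow_card_sub_one_eq_one (Finset.ne_of_mem_erase ht)
    rw [Finset.sum_congr rfl this, Finset.sum_const, Finset.card_erase_of_mem (Finset.mem_univ _)]
    have hcard : (Finset.univ : Finset (ZMod p)).card = p := by
      rw [Finset.card_univ, ZMod.card]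
    rw [hcard]
    have h1 : 1 ≤ p := hp.one_le
    rw [nsmul_eq_mul, mul_one, Nat.cast_sub h1]
    simp [ZMod.natCast_self]
  · have hk' : k < p - 1 := by omega
    have := FiniteField.sum_pow_lt_card_sub_one (ZMod p) k (by rw [ZMod.card]; exact hk')
    simpa using this

lemma sum_cast_pow (k : ℕ) (hk : k ≤ p - 1) :
    (∑ t : ZMod p, ((ZMod.castHom (dvd_refl p) F) t) ^ k) =
      if k = p - 1 then (-1 : F) else 0 := by
  have : (∑ t : ZMod p, ((ZMod.castHom (dvd_refl p) F) t) ^ k) =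
      (ZMod.castHom (dvd_refl p) F) (∑ t : ZMod p, t ^ k) := by
    rw [map_sum]
    exact Finset.sum_congr rfl fun t _ => (map_pow _ _ _).symm
  rw [this, zmod_sum_pow p k hk]
  split_ifs <;> simp [map_neg, map_one]

lemma Ssum (k m : ℕ) (hkm : k + m ≤ p - 1) :
    (∑ t : ZMod p, C ((ZMod.castHom (dvd_refl p) F) t) ^ m *
      (X 3 + 3 * C ((ZMod.castHom (dvd_refl p) F) t) * X 2) ^ k) =
    if k + m = p - 1 then -(C ((3:F) ^ k) * (X 2 : MvPolynomial (Fin 4) F) ^ k) else 0 := by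
  have key : ∀ t : ZMod p, C ((ZMod.castHom (dvd_refl p) F) t) ^ m *
      ((X 3 : MvPolynomial (Fin 4) F) + 3 * C ((ZMod.castHom (dvd_refl p) F) t) * X 2) ^ k
      = ∑ i ∈ Finset.range (k+1),
          (X 3 ^ i * X 2 ^ (k-i) * C ((3:F)^(k-i) * (k.choose i : F)))
            * C ((ZMod.castHom (dvd_refl p) F) t ^ (m + (k-i))) := by
    intro t
    rw [add_pow, Finset.mul_sum]
    refine Finset.sum_congr rfl fun i hi => ?_
    simp only [map_mul, map_pow, pow_add, map_ofNat, MvPolynomial.C_eq_coe_nat, map_natCast]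
    ring
  have step1 : (∑ t : ZMod p, C ((ZMod.castHom (dvd_refl p) F) t) ^ m *
      ((X 3 : MvPolynomial (Fin 4) F) + 3 * C ((ZMod.castHom (dvd_refl p) F) t) * X 2) ^ k)
      = ∑ t : ZMod p, ∑ i ∈ Finset.range (k+1),
          (X 3 ^ i * X 2 ^ (k-i) * C ((3:F)^(k-i) * (k.choose i : F)))
            * C ((ZMod.castHom (dvd_refl p) F) t ^ (m + (k-i))) :=
    Finset.sum_congr rfl fun t _ => key t
  rw [step1, Finset.sum_comm]
  have inner : ∀ i, (∑ t : ZMod p,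
      ((X 3 : MvPolynomial (Fin 4) F) ^ i * X 2 ^ (k-i) * C ((3:F)^(k-i) * (k.choose i : F)))
        * C ((ZMod.castHom (dvd_refl p) F) t ^ (m + (k-i)))) =
      (X 3 ^ i * X 2 ^ (k-i) * C ((3:F)^(k-i) * (k.choose i : F)))
        * C (∑ t : ZMod p, (ZMod.castHom (dvd_refl p) F) t ^ (m + (k-i))) := by
    intro i
    rw [← Finset.mul_sum, ← map_sum]
  have step2 : (∑ i ∈ Finset.range (k+1), ∑ t : ZMod p,
      ((X 3 : MvPolynomial (Fin 4) F) ^ i * X 2 ^ (k-i) * C ((3:F)^(k-i) * (k.choose i : F)))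
        * C ((ZMod.castHom (dvd_refl p) F) t ^ (m + (k-i))))
      = ∑ i ∈ Finset.range (k+1),
          (X 3 ^ i * X 2 ^ (k-i) * C ((3:F)^(k-i) * (k.choose i : F)))
            * C (∑ t : ZMod p, (ZMod.castHom (dvd_refl p) F) t ^ (m + (k-i))) :=
    Finset.sum_congr rfl fun i _ => inner i
  rw [step2]
  split_ifs with h
  · rw [Finset.sum_eq_single_of_mem 0 (Finset.mem_range.mpr (by omega))]
    · rw [sum_cast_pow p F _ (by omega), if_pos (by omega)]
      simp only [pow_zero, one_mul, Nat.sub_zero, Nat.choose_zero_right, Nat.cast_one, mul_one,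
        map_neg, map_one]
      ring
    · intro i hi hi0
      rw [sum_cast_pow p F _ (by rw [Finset.mem_range] at hi; omega),
        if_neg (by rw [Finset.mem_range] at hi; omega)]
      simp
  · refine Finset.sum_eq_zero fun i hi => ?_
    rw [sum_cast_pow p F _ (by rw [Finset.mem_range] at hi; omega),
      if_neg (by rw [Finset.mem_range] at hi; omega)]
    simp

/-- Expansion of `(a + b·X1 + c·X0)^n` modulo `X1²` and `X0`. -/
lemma exp3 (a b c : MvPolynomial (Fin 4) F) (n : ℕ) :
    ∃ A B, (a + b * X 1 + c * X 0) ^ n =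
      a ^ n + (n : MvPolynomial (Fin 4) F) * a ^ (n - 1) * b * X 1
        + X 1 ^ 2 * A + X 0 * B := by
  induction n with
  | zero => exact ⟨0, 0, by simp⟩
  | succ n ih =>
    obtain ⟨A, B, hAB⟩ := ih
    cases n with
    | zero =>
      refine ⟨0, c, ?_⟩
      simp only [pow_one, Nat.cast_one, pow_zero, Nat.sub_self]
      ring
    | succ m =>
      refine ⟨a * A + ((m:MvPolynomial (Fin 4) F) + 1) * a ^ m * b ^ 2 + b * X 1 * A,
        a * B + b * X 1 * B + c * (a ^ (m + 1)
          + ((m:MvPolynomial (Fin 4) F) + 1) * a ^ m * b * X 1 + X 1 ^ 2 * A + X 0 * B), ?_⟩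
      have h1 : ((m + 1 : ℕ) : MvPolynomial (Fin 4) F) = (m : MvPolynomial (Fin 4) F) + 1 := by
        push_cast; ring
      have h2 : ((m + 1 + 1 : ℕ) : MvPolynomial (Fin 4) F)
          = (m : MvPolynomial (Fin 4) F) + 2 := by push_cast; ring
      rw [pow_succ, hAB]
      simp only [Nat.add_sub_cancel, h1, h2]
      ring



lemma Tstructure (hp : 3 < p) (E : ℕ) (hE : 1 ≤ E) :
    ∃ A B, trP p F ((X 3 : MvPolynomial (Fin 4) F) ^ (p - 2) * X 2 ^ E) =
      C (-(3 ^ (p - 2) * ((((p - 2 : ℕ) : F)) + 2 * (E : F))))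
        * (X 1 * X 2 ^ (p - 3 + E)) + X 1 ^ 2 * A + X 0 * B := by
  set τ : ZMod p → F := fun s => (ZMod.castHom (dvd_refl p) F) s with hτ
  have per : ∀ s : ZMod p, ∃ A B,
      act p F !![1, s; 0, 1] ((X 3 : MvPolynomial (Fin 4) F) ^ (p - 2) * X 2 ^ E) =
        (X 3 + 3 * C (τ s) * X 2) ^ (p - 2) * X 2 ^ E
        + ((X 3 + 3 * C (τ s) * X 2) ^ (p - 2)
             * (((E : ℕ) : MvPolynomial (Fin 4) F) * X 2 ^ (E - 1) * (2 * C (τ s)))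
           + X 2 ^ E * (((p - 2 : ℕ) : MvPolynomial (Fin 4) F)
             * (X 3 + 3 * C (τ s) * X 2) ^ (p - 3) * (3 * C (τ s) ^ 2))) * X 1
        + X 1 ^ 2 * A + X 0 * B := by
    intro s
    obtain ⟨A1, B1, h1⟩ := exp3 F (X 3 + 3 * C (τ s) * X 2) (3 * C (τ s) ^ 2) (C (τ s) ^ 3) (p - 2)
    obtain ⟨A2, B2, h2⟩ := exp3 F (X 2) (2 * C (τ s)) (C (τ s) ^ 2) E
    have e1 : act p F !![1, s; 0, 1] (X 3 : MvPolynomial (Fin 4) F) =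
        (X 3 + 3 * C (τ s) * X 2) + (3 * C (τ s) ^ 2) * X 1 + (C (τ s) ^ 3) * X 0 := by
      rw [act_U_X3]; ring
    have e2 : act p F !![1, s; 0, 1] (X 2 : MvPolynomial (Fin 4) F) =
        X 2 + (2 * C (τ s)) * X 1 + (C (τ s) ^ 2) * X 0 := by
      rw [act_U_X2]; ring
    have hsub : p - 2 - 1 = p - 3 := by omega
    set a : MvPolynomial (Fin 4) F := X 3 + 3 * C (τ s) * X 2 with ha
    set P1 : MvPolynomial (Fin 4) F := a ^ (p - 2) with hP1
    set Q1 : MvPolynomial (Fin 4) F :=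
      ((p - 2 : ℕ) : MvPolynomial (Fin 4) F) * a ^ (p - 3) * (3 * C (τ s) ^ 2) with hQ1
    set P2 : MvPolynomial (Fin 4) F := X 2 ^ E with hP2
    set Q2 : MvPolynomial (Fin 4) F :=
      ((E : ℕ) : MvPolynomial (Fin 4) F) * X 2 ^ (E - 1) * (2 * C (τ s)) with hQ2
    refine ⟨Q1 * Q2 + P1 * A2 + P2 * A1 + Q1 * X 1 * A2 + Q2 * X 1 * A1 + X 1 ^ 2 * (A1 * A2),
      B1 * (P2 + Q2 * X 1 + X 1 ^ 2 * A2 + X 0 * B2) + B2 * (P1 + Q1 * X 1 + X 1 ^ 2 * A1), ?_⟩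
    rw [map_mul, map_pow, map_pow, e1, e2, h1, h2, hsub]
    simp only [← ha, ← hP1, ← hQ1, ← hP2, ← hQ2]
    ring
  choose A B hAB using per
  refine ⟨∑ s : ZMod p, A s, ∑ s : ZMod p, B s, ?_⟩
  unfold trP
  rw [Finset.sum_congr rfl fun s (_ : s ∈ Finset.univ) => hAB s]
  rw [Finset.sum_add_distrib, Finset.sum_add_distrib, Finset.sum_add_distrib,
    ← Finset.mul_sum, ← Finset.mul_sum]
  have h0 : (∑ s : ZMod p,
      ((X 3 : MvPolynomial (Fin 4) F) + 3 * C (τ s) * X 2) ^ (p - 2)) = 0 := by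
    have hcongr : (∑ s : ZMod p,
        ((X 3 : MvPolynomial (Fin 4) F) + 3 * C (τ s) * X 2) ^ (p - 2))
        = ∑ s : ZMod p, C (τ s) ^ 0 *
          ((X 3 : MvPolynomial (Fin 4) F) + 3 * C (τ s) * X 2) ^ (p - 2) :=
      Finset.sum_congr rfl fun s _ => by rw [pow_zero, one_mul]
    rw [hcongr, Ssum p F (p - 2) 0 (by omega), if_neg (by omega)]
  have hS1 : (∑ s : ZMod p,
      ((X 3 : MvPolynomial (Fin 4) F) + 3 * C (τ s) * X 2) ^ (p - 2) * X 2 ^ E) = 0 := by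
    rw [← Finset.sum_mul]
    exact mul_eq_zero_of_left h0 _
  have hSa : (∑ s : ZMod p, C (τ s) ^ 1 *
      ((X 3 : MvPolynomial (Fin 4) F) + 3 * C (τ s) * X 2) ^ (p - 2))
      = -(C ((3:F) ^ (p - 2)) * X 2 ^ (p - 2)) := by
    rw [Ssum p F (p - 2) 1 (by omega), if_pos (by omega)]
  have hSb : (∑ s : ZMod p, C (τ s) ^ 2 *
      ((X 3 : MvPolynomial (Fin 4) F) + 3 * C (τ s) * X 2) ^ (p - 3))
      = -(C ((3:F) ^ (p - 3)) * X 2 ^ (p - 3)) := by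
    rw [Ssum p F (p - 3) 2 (by omega), if_pos (by omega)]
  have h2 : (∑ s : ZMod p,
      ((X 3 + 3 * C (τ s) * X 2) ^ (p - 2)
          * (((E : ℕ) : MvPolynomial (Fin 4) F) * X 2 ^ (E - 1) * (2 * C (τ s)))
        + X 2 ^ E * (((p - 2 : ℕ) : MvPolynomial (Fin 4) F)
          * (X 3 + 3 * C (τ s) * X 2) ^ (p - 3) * (3 * C (τ s) ^ 2))))
      = C (-(3 ^ (p - 2) * ((((p - 2 : ℕ) : F)) + 2 * (E : F)))) * X 2 ^ (p - 3 + E) := by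
    have step : (∑ s : ZMod p,
        ((X 3 + 3 * C (τ s) * X 2) ^ (p - 2)
            * (((E : ℕ) : MvPolynomial (Fin 4) F) * X 2 ^ (E - 1) * (2 * C (τ s)))
          + X 2 ^ E * (((p - 2 : ℕ) : MvPolynomial (Fin 4) F)
            * (X 3 + 3 * C (τ s) * X 2) ^ (p - 3) * (3 * C (τ s) ^ 2))))
        = (((E : ℕ) : MvPolynomial (Fin 4) F) * X 2 ^ (E - 1) * 2) *
            (∑ s : ZMod p, C (τ s) ^ 1 *
              ((X 3 : MvPolynomial (Fin 4) F) + 3 * C (τ s) * X 2) ^ (p - 2))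
          + (X 2 ^ E * (((p - 2 : ℕ) : MvPolynomial (Fin 4) F) * 3)) *
            (∑ s : ZMod p, C (τ s) ^ 2 *
              ((X 3 : MvPolynomial (Fin 4) F) + 3 * C (τ s) * X 2) ^ (p - 3)) := by
      rw [Finset.mul_sum, Finset.mul_sum, ← Finset.sum_add_distrib]
      exact Finset.sum_congr rfl fun s _ => by ring
    rw [step, hSa, hSb]
    have e1 : (X 2 : MvPolynomial (Fin 4) F) ^ (E - 1) * X 2 ^ (p - 2) = X 2 ^ (p - 3 + E) := by
      rw [← pow_add]; congr 1; omega
    have e2 : (X 2 : MvPolynomial (Fin 4) F) ^ E * X 2 ^ (p - 3) = X 2 ^ (p - 3 + E) := by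
      rw [← pow_add]; congr 1; omega
    have hexp2 : (3:F) ^ (p - 2) = 3 * 3 ^ (p - 3) := by
      rw [← pow_succ']; congr 1; omega
    have hC : (((E : ℕ) : MvPolynomial (Fin 4) F) * 2) * C ((3:F) ^ (p - 2))
        + (((p - 2 : ℕ) : MvPolynomial (Fin 4) F) * 3) * C ((3:F) ^ (p - 3))
        = C ((3:F) ^ (p - 2) * ((((p - 2 : ℕ) : F)) + 2 * (E : F))) := by
      have cE : ((E : ℕ) : MvPolynomial (Fin 4) F) = C ((E : ℕ) : F) := by
        rw [MvPolynomial.C_eq_coe_nat]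
      have cP : (((p - 2 : ℕ) : ℕ) : MvPolynomial (Fin 4) F) = C (((p - 2 : ℕ) : ℕ) : F) := by
        rw [MvPolynomial.C_eq_coe_nat]
      have c2 : (2 : MvPolynomial (Fin 4) F) = C (2 : F) := by
        rw [map_ofNat]
      have c3 : (3 : MvPolynomial (Fin 4) F) = C (3 : F) := by
        rw [map_ofNat]
      rw [cE, cP, c2, c3, ← map_mul, ← map_mul, ← map_mul, ← map_mul, ← map_add, C_inj, hexp2]
      ring
    have hCneg : (C (-((3:F) ^ (p - 2) * ((((p - 2 : ℕ) : F)) + 2 * (E : F))))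
        : MvPolynomial (Fin 4) F)
        = -C ((3:F) ^ (p - 2) * ((((p - 2 : ℕ) : F)) + 2 * (E : F))) := map_neg _ _
    linear_combination (-(((E : ℕ) : MvPolynomial (Fin 4) F) * 2 * C ((3:F) ^ (p - 2)))) * e1
      + (-((((p - 2 : ℕ) : ℕ) : MvPolynomial (Fin 4) F) * 3 * C ((3:F) ^ (p - 3)))) * e2
      - (X 2 : MvPolynomial (Fin 4) F) ^ (p - 3 + E) * hC
      + (-((X 2 : MvPolynomial (Fin 4) F) ^ E * X 2 ^ (p - 3))) * hCneg
  have h2' : (∑ x : ZMod p,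
      (((X 3 + 3 * C (τ x) * X 2) ^ (p - 2)
          * (((E : ℕ) : MvPolynomial (Fin 4) F) * X 2 ^ (E - 1) * (2 * C (τ x)))
        + X 2 ^ E * (((p - 2 : ℕ) : MvPolynomial (Fin 4) F)
          * (X 3 + 3 * C (τ x) * X 2) ^ (p - 3) * (3 * C (τ x) ^ 2))) * X 1))
      = C (-(3 ^ (p - 2) * ((((p - 2 : ℕ) : F)) + 2 * (E : F))))
          * (X 1 * X 2 ^ (p - 3 + E)) := by
    rw [← Finset.sum_mul, h2]
    ring
  rw [hS1, h2', zero_add]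


set_option maxHeartbeats 1000000 in
lemma act_X_homog (g : Matrix (Fin 2) (Fin 2) (ZMod p)) (i : Fin 4) :
    (act p F g (X i)).IsHomogeneous 1 := by
  have key : ∀ a b c d : F, (C a * X 0 + C b * X 1 + C c * X 2 + C d * X 3 :
      MvPolynomial (Fin 4) F).IsHomogeneous 1 := fun a b c d =>
    (((isHomogeneous_C_mul_X a 0).add (isHomogeneous_C_mul_X b 1)).add
      (isHomogeneous_C_mul_X c 2)).add (isHomogeneous_C_mul_X d 3)
  fin_cases i
  · show (act p F g (X 0)).IsHomogeneous 1
    have : act p F g (X 0) = C (((ZMod.castHom (dvd_refl p) F) (g 1 1)) ^ 3) * X 0 + C (3 * ((ZMod.castHom (dvd_refl p) F) (g 1 1)) ^ 2 * ((ZMod.castHom (dvd_refl p) F) (g 1 0))) * X 1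
        + C (3 * ((ZMod.castHom (dvd_refl p) F) (g 1 1)) * ((ZMod.castHom (dvd_refl p) F) (g 1 0)) ^ 2) * X 2 + C (((ZMod.castHom (dvd_refl p) F) (g 1 0)) ^ 3) * X 3 := by
      simp [act, map_ofNat]
    rw [this]; exact key _ _ _ _
  · show (act p F g (X 1)).IsHomogeneous 1
    have : act p F g (X 1) = C (((ZMod.castHom (dvd_refl p) F) (g 1 1)) ^ 2 * ((ZMod.castHom (dvd_refl p) F) (g 0 1))) * X 0
        + C (((ZMod.castHom (dvd_refl p) F) (g 1 1)) ^ 2 * ((ZMod.castHom (dvd_refl p) F) (g 0 0)) + 2 * ((ZMod.castHom (dvd_refl p) F) (g 1 1)) * ((ZMod.castHom (dvd_refl p) F) (g 0 1)) * ((ZMod.castHom (dvd_refl p) F) (g 1 0))) * X 1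
        + C (2 * ((ZMod.castHom (dvd_refl p) F) (g 1 1)) * ((ZMod.castHom (dvd_refl p) F) (g 1 0)) * ((ZMod.castHom (dvd_refl p) F) (g 0 0)) + ((ZMod.castHom (dvd_refl p) F) (g 0 1)) * ((ZMod.castHom (dvd_refl p) F) (g 1 0)) ^ 2) * X 2
        + C (((ZMod.castHom (dvd_refl p) F) (g 1 0)) ^ 2 * ((ZMod.castHom (dvd_refl p) F) (g 0 0))) * X 3 := by
      simp [act, map_ofNat]
    rw [this]; exact key _ _ _ _
  · show (act p F g (X 2)).IsHomogeneous 1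
    have : act p F g (X 2) = C (((ZMod.castHom (dvd_refl p) F) (g 1 1)) * ((ZMod.castHom (dvd_refl p) F) (g 0 1)) ^ 2) * X 0
        + C (2 * ((ZMod.castHom (dvd_refl p) F) (g 1 1)) * ((ZMod.castHom (dvd_refl p) F) (g 0 1)) * ((ZMod.castHom (dvd_refl p) F) (g 0 0)) + ((ZMod.castHom (dvd_refl p) F) (g 0 1)) ^ 2 * ((ZMod.castHom (dvd_refl p) F) (g 1 0))) * X 1
        + C (((ZMod.castHom (dvd_refl p) F) (g 1 1)) * ((ZMod.castHom (dvd_refl p) F) (g 0 0)) ^ 2 + 2 * ((ZMod.castHom (dvd_refl p) F) (g 0 1)) * ((ZMod.castHom (dvd_refl p) F) (g 1 0)) * ((ZMod.castHom (dvd_refl p) F) (g 0 0))) * X 2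
        + C (((ZMod.castHom (dvd_refl p) F) (g 1 0)) * ((ZMod.castHom (dvd_refl p) F) (g 0 0)) ^ 2) * X 3 := by
      simp [act, map_ofNat]
    rw [this]; exact key _ _ _ _
  · show (act p F g (X 3)).IsHomogeneous 1
    have : act p F g (X 3) = C (((ZMod.castHom (dvd_refl p) F) (g 0 1)) ^ 3) * X 0 + C (3 * ((ZMod.castHom (dvd_refl p) F) (g 0 1)) ^ 2 * ((ZMod.castHom (dvd_refl p) F) (g 0 0))) * X 1
        + C (3 * ((ZMod.castHom (dvd_refl p) F) (g 0 1)) * ((ZMod.castHom (dvd_refl p) F) (g 0 0)) ^ 2) * X 2 + C (((ZMod.castHom (dvd_refl p) F) (g 0 0)) ^ 3) * X 3 := by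
      simp [act, map_ofNat]
    rw [this]; exact key _ _ _ _

lemma act_homog (g : Matrix (Fin 2) (Fin 2) (ZMod p)) {φ : MvPolynomial (Fin 4) F} {n : ℕ}
    (h : φ.IsHomogeneous n) : (act p F g φ).IsHomogeneous n := by
  rw [MvPolynomial.aeval_unique (act p F g)]
  simpa using h.aeval ((act p F g) ∘ X) (fun i => act_X_homog p F g i)

lemma Nsplit : ∃ g0 g1 g2 : MvPolynomial (Fin 4) F,
    Npoly p F = X 3 ^ p + X 0 * g0 + X 1 * g1 + X 2 * g2 := by
  have main : ∀ s : Finset (ZMod p), ∃ g0 g1 g2 : MvPolynomial (Fin 4) F,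
      (∏ t ∈ s, act p F !![1, t; 0, 1] (X 3)) = X 3 ^ s.card + X 0 * g0 + X 1 * g1 + X 2 * g2 := by
    intro s
    induction s using Finset.induction_on with
    | empty => exact ⟨0, 0, 0, by simp⟩
    | @insert a s' hx ih =>
      obtain ⟨g0, g1, g2, hg⟩ := ih
      rw [Finset.prod_insert hx, Finset.card_insert_of_notMem hx, hg, act_U_X3]
      set z := C ((ZMod.castHom (dvd_refl p) F) a) with hzdef
      refine ⟨z ^ 3 * (X 3 ^ s'.card + X 0 * g0 + X 1 * g1 + X 2 * g2) + X 3 * g0,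
        3 * z ^ 2 * (X 3 ^ s'.card + X 0 * g0 + X 1 * g1 + X 2 * g2) + X 3 * g1,
        3 * z * (X 3 ^ s'.card + X 0 * g0 + X 1 * g1 + X 2 * g2) + X 3 * g2, ?_⟩
      rw [pow_succ]
      ring
  obtain ⟨g0, g1, g2, hg⟩ := main Finset.univ
  refine ⟨g0, g1, g2, ?_⟩
  unfold Npoly
  rw [hg, Finset.card_univ, ZMod.card]

lemma Npow (j : ℕ) : ∃ g0 g1 g2 : MvPolynomial (Fin 4) F,
    Npoly p F ^ j = X 3 ^ (p * j) + X 0 * g0 + X 1 * g1 + X 2 * g2 := by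
  obtain ⟨n0, n1, n2, hN⟩ := Nsplit p F
  induction j with
  | zero => exact ⟨0, 0, 0, by simp⟩
  | succ n ih =>
    obtain ⟨g0, g1, g2, hg⟩ := ih
    refine ⟨X 3 ^ (p * n) * n0 + g0 * (X 3 ^ p + X 0 * n0 + X 1 * n1 + X 2 * n2),
      X 3 ^ (p * n) * n1 + g1 * (X 3 ^ p + X 0 * n0 + X 1 * n1 + X 2 * n2),
      X 3 ^ (p * n) * n2 + g2 * (X 3 ^ p + X 0 * n0 + X 1 * n1 + X 2 * n2), ?_⟩
    rw [pow_succ, hg, hN, Nat.mul_succ, pow_add]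
    ring

lemma actL_N (s : ZMod p) (hs : s ≠ 0) :
    ∃ g, act p F !![1, 0; s, 1] (Npoly p F) = X 0 * g := by
  have hfac : Npoly p F = act p F !![1, -s⁻¹; 0, 1] (X 3)
      * ∏ t ∈ Finset.univ.erase (-s⁻¹), act p F !![1, t; 0, 1] (X 3) :=
    (Finset.mul_prod_erase Finset.univ _ (Finset.mem_univ (-s⁻¹))).symm
  have hone : C ((ZMod.castHom (dvd_refl p) F) (-s⁻¹)) * C ((ZMod.castHom (dvd_refl p) F) s)
      = (-1 : MvPolynomial (Fin 4) F) := by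
    rw [← map_mul, ← map_mul]
    have : (-s⁻¹) * s = -1 := by
      rw [neg_mul, inv_mul_cancel₀ hs]
    rw [this, map_neg, map_neg, map_one, map_one]
  have hkey : act p F !![1, 0; s, 1] (act p F !![1, -s⁻¹; 0, 1] (X 3))
      = C ((ZMod.castHom (dvd_refl p) F) (-s⁻¹)) ^ 3 * X 0 := by
    rw [act_L_U, hone]
    simp
  refine ⟨C ((ZMod.castHom (dvd_refl p) F) (-s⁻¹)) ^ 3
    * act p F !![1, 0; s, 1] (∏ t ∈ Finset.univ.erase (-s⁻¹), act p F !![1, t; 0, 1] (X 3)), ?_⟩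
  rw [hfac, map_mul, hkey]
  ring

lemma actEta_N : ∃ g, act p F !![0, 1; -1, 0] (Npoly p F) = X 0 * g := by
  have hfac : Npoly p F = act p F !![1, (0 : ZMod p); 0, 1] (X 3)
      * ∏ t ∈ Finset.univ.erase (0 : ZMod p), act p F !![1, t; 0, 1] (X 3) :=
    (Finset.mul_prod_erase Finset.univ _ (Finset.mem_univ (0 : ZMod p))).symm
  have hu0 : act p F !![1, (0 : ZMod p); 0, 1] (X 3) = X 3 := by
    rw [act_U_X3]
    simp
  refine ⟨act p F !![0, 1; -1, 0]
    (∏ t ∈ Finset.univ.erase (0 : ZMod p), act p F !![1, t; 0, 1] (X 3)), ?_⟩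
  rw [hfac, map_mul, hu0, act_eta_X3]

lemma coeff_act_zero (M : Matrix (Fin 2) (Fin 2) (ZMod p))
    (hdiv : ∃ g, act p F M (Npoly p F) = X 0 * g) (j : ℕ) (hj : 1 ≤ j)
    (T' : MvPolynomial (Fin 4) F) (e : Fin 4 →₀ ℕ) (he : e 0 = 0) :
    coeff e (act p F M (Npoly p F ^ j * T')) = 0 := by
  obtain ⟨g, hg⟩ := hdiv
  have h1 : act p F M (Npoly p F ^ j * T')
      = X 0 * (g * (X 0 * g) ^ (j - 1) * act p F M T') := by
    obtain ⟨k, rfl⟩ : ∃ k, j = k + 1 := ⟨j - 1, by omega⟩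
    rw [map_mul, map_pow, hg, pow_succ]
    simp only [Nat.add_sub_cancel]
    ring
  rw [h1, coeff_X_mul', if_neg]
  simp [Finsupp.mem_support_iff, he]
/-- for `j ≥ 1`, `m = 2 + ⌊3j/(p-1)⌋` and `j ≠ ⌈(m-2)(p-1)/3⌉`, the lead
monomial of `tr_B^G(N^j · tr^P(a₃^{p-2} a₂^{(m-1)(p-1)+3-3j}))` is
`a₃^{pj} a₂^{m(p-1)+1-3j} a₁`. -/
theorem Deltafamily (p : ℕ) [Fact p.Prime] (hp : 3 < p)
    (F : Type) [Field F] [CharP F p] (j : ℕ) (hj : 1 ≤ j)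
    (hj' : j ≠ ((2 + 3 * j / (p - 1) - 2) * (p - 1) + 2) / 3) :
    LeadMonomialIs
      (trBG p F (Npoly p F ^ j *
        trP p F (X 3 ^ (p - 2) * X 2 ^ ((2 + 3 * j / (p - 1) - 1) * (p - 1) + 3 - 3 * j))))
      (Finsupp.single 3 (p * j) +
        Finsupp.single 2 ((2 + 3 * j / (p - 1)) * (p - 1) + 1 - 3 * j) +
        Finsupp.single 1 1) := by
  have hP : p.Prime := Fact.out
  have hp5 : 5 ≤ p := by
    rcases Nat.lt_or_ge p 5 with h | h
    · interval_cases p <;> first | omega | exact absurd hP (by decide)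
    · exact h
  set q := 3 * j / (p - 1) with hq
  set E := (2 + q - 1) * (p - 1) + 3 - 3 * j with hE
  set c2 := (2 + q) * (p - 1) + 1 - 3 * j with hc2
  set M := q * (p - 1) with hM
  have hdm : M + 3 * j % (p - 1) = 3 * j := by
    rw [hM, hq, mul_comm]
    exact Nat.div_add_mod (3 * j) (p - 1)
  clear_value q M E c2
  have hmlt : 3 * j % (p - 1) < p - 1 := Nat.mod_lt _ (by omega)
  have hEM : E = M + (p - 1) + 3 - 3 * j := by
    have hx : (2 + q - 1) * (p - 1) = M + (p - 1) := by
      rw [hM, show 2 + q - 1 = q + 1 from by omega, add_mul, one_mul]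
    rw [hE, hx]
  have hc2M : c2 = M + 2 * (p - 1) + 1 - 3 * j := by
    have hy : (2 + q) * (p - 1) = M + 2 * (p - 1) := by
      rw [hM, add_mul, add_comm]
    rw [hc2, hy]
  have hE4 : 4 ≤ E := by omega
  have hEub : E ≤ p + 2 := by omega
  have hc2eq : c2 = p - 3 + E := by omega
  -- the excluded case
  have hj'' : j ≠ (M + 2) / 3 := by
    rwa [show (2 + q - 2) * (p - 1) + 2 = M + 2 from by
      rw [hM, show 2 + q - 2 = q from by omega]] at hj'
  have hEne : E - 1 ≠ p := by
    intro hcon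
    have h5 := Nat.div_add_mod (M + 2) 3
    have h6 : (M + 2) % 3 < 3 := Nat.mod_lt _ (by omega)
    omega
  -- the lead coefficient is nonzero
  have h2ne : (2 : F) ≠ 0 := by
    intro h
    have := (CharP.cast_eq_zero_iff F p 2).mp (by exact_mod_cast h)
    have := Nat.le_of_dvd (by norm_num) this
    omega
  have h3ne : (3 : F) ≠ 0 := by
    intro h
    have := (CharP.cast_eq_zero_iff F p 3).mp (by exact_mod_cast h)
    have := Nat.le_of_dvd (by norm_num) this
    omega
  have hE1ne : ((E - 1 : ℕ) : F) ≠ 0 := by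
    rw [Ne, CharP.cast_eq_zero_iff F p]
    intro hdvd
    have h1 : p ≤ E - 1 := Nat.le_of_dvd (by omega) hdvd
    have h2 : p ∣ (E - 1 - p) := (Nat.dvd_sub hdvd dvd_rfl)
    have h3 : E - 1 - p < p := by omega
    have h4 : E - 1 - p = 0 := Nat.eq_zero_of_dvd_of_lt h2 h3
    omega
  set c : F := -(3 ^ (p - 2) * ((((p - 2 : ℕ) : F)) + 2 * (E : F))) with hc
  have hp2cast : ((p - 2 : ℕ) : F) = -2 := by
    rw [Nat.cast_sub (by omega : 2 ≤ p), CharP.cast_eq_zero F p, zero_sub]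
    norm_num
  have hcval : c = -(3 ^ (p - 2) * (2 * ((E - 1 : ℕ) : F))) := by
    rw [hc, hp2cast, Nat.cast_sub (by omega : 1 ≤ E)]
    push_cast
    ring
  have hcne : c ≠ 0 := by
    rw [hcval]
    exact neg_ne_zero.mpr (mul_ne_zero (pow_ne_zero _ h3ne) (mul_ne_zero h2ne hE1ne))
  -- structural decompositions
  obtain ⟨TA, TB, hT⟩ := Tstructure p F hp E (by omega)
  obtain ⟨g0, g1, g2, hN⟩ := Npow p F j
  rw [← hc] at hT
  set b0 : Fin 4 →₀ ℕ := Finsupp.single 1 1 + Finsupp.single 2 (p - 3 + E) with hb0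
  have hmon : (X 1 : MvPolynomial (Fin 4) F) * X 2 ^ (p - 3 + E) = monomial b0 1 := by
    rw [hb0, ← pow_one (X 1 : MvPolynomial (Fin 4) F), X_pow_eq_monomial, X_pow_eq_monomial,
      monomial_mul, one_mul]
  set f := Npoly p F ^ j * trP p F (X 3 ^ (p - 2) * X 2 ^ E) with hf
  have hfT : f = C c * (Npoly p F ^ j * monomial b0 1)
      + X 1 ^ 2 * (Npoly p F ^ j * TA) + X 0 * (Npoly p F ^ j * TB) := by
    rw [hf, hT, ← hmon]
    ring
  have hcf : ∀ e : Fin 4 →₀ ℕ, e 0 = 0 → e 1 ≤ 1 →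
      coeff e f = c * (if b0 ≤ e then coeff (e - b0) (Npoly p F ^ j) else 0) := by
    intro e he0 he1
    have hz1 : coeff e (X 1 ^ 2 * (Npoly p F ^ j * TA)) = 0 := by
      rw [pow_two, mul_assoc, coeff_X_mul']
      split_ifs with h1
      · rw [coeff_X_mul', if_neg]
        rw [Finsupp.mem_support_iff] at h1 ⊢
        simp only [Finsupp.tsub_apply, Finsupp.single_eq_same]
        omega
      · rfl
    have hz0 : coeff e (X 0 * (Npoly p F ^ j * TB)) = 0 := by
      rw [coeff_X_mul', if_neg]
      rw [Finsupp.mem_support_iff]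
      simp [he0]
    rw [hfT, coeff_add, coeff_add, coeff_C_mul, coeff_mul_monomial', hz1, hz0, add_zero, add_zero]
    split_ifs <;> simp
  have hNcoeff : ∀ k : ℕ, coeff (Finsupp.single 3 k) (Npoly p F ^ j)
      = if k = p * j then 1 else 0 := by
    intro k
    have z0 : coeff (Finsupp.single (3 : Fin 4) k) (X 0 * g0) = 0 := by
      rw [coeff_X_mul', if_neg]
      rw [Finsupp.mem_support_iff]
      simp [Finsupp.single_apply]
    have z1 : coeff (Finsupp.single (3 : Fin 4) k) (X 1 * g1) = 0 := by
      rw [coeff_X_mul', if_neg]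
      rw [Finsupp.mem_support_iff]
      simp [Finsupp.single_apply]
    have z2 : coeff (Finsupp.single (3 : Fin 4) k) (X 2 * g2) = 0 := by
      rw [coeff_X_mul', if_neg]
      rw [Finsupp.mem_support_iff]
      simp [Finsupp.single_apply]
    rw [hN, coeff_add, coeff_add, coeff_add, z0, z1, z2, add_zero, add_zero, add_zero,
      coeff_X_pow]
    have : (Finsupp.single (3 : Fin 4) (p * j) = Finsupp.single 3 k) ↔ (k = p * j) := by
      constructor
      · intro h
        exact (Finsupp.single_injective 3 h).symm
      · intro h
        rw [h]
    simp only [this]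
  -- homogeneity
  have hNhom : (Npoly p F).IsHomogeneous p := by
    have hcard : (∑ _t : ZMod p, (1 : ℕ)) = p := by
      simp [Finset.card_univ, ZMod.card]
    have h := MvPolynomial.IsHomogeneous.prod Finset.univ
      (fun t => act p F !![1, t; 0, 1] (X 3)) (fun _ => 1)
      (fun t _ => act_homog p F _ (isHomogeneous_X F 3))
    rw [hcard] at h
    exact h
  have hThom : (trP p F ((X 3 : MvPolynomial (Fin 4) F) ^ (p - 2) * X 2 ^ E)).IsHomogeneous
      (p - 2 + E) := by
    unfold trP
    exact MvPolynomial.IsHomogeneous.sum _ _ _ (fun s _ => act_homog p F _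
      ((isHomogeneous_X_pow 3 (p - 2)).mul (isHomogeneous_X_pow 2 E)))
  have hfhom : f.IsHomogeneous (p * j + (p - 2 + E)) := by
    rw [hf]
    exact (hNhom.pow j).mul hThom
  have htr : (trBG p F f).IsHomogeneous (p * j + (p - 2 + E)) := by
    unfold trBG
    exact (MvPolynomial.IsHomogeneous.sum _ _ _ fun s _ => act_homog p F _ hfhom).add
      (act_homog p F _ hfhom)
  -- transfer keeps coefficients at monomials with no a0
  have hcoeff_tr : ∀ e : Fin 4 →₀ ℕ, e 0 = 0 → coeff e (trBG p F f) = coeff e f := by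
    intro e he
    unfold trBG
    rw [← Finset.add_sum_erase Finset.univ _ (Finset.mem_univ (0 : ZMod p))]
    rw [coeff_add, coeff_add, coeff_sum, act_id]
    have hz : ∀ s ∈ Finset.univ.erase (0 : ZMod p),
        coeff e (act p F !![1, 0; s, 1] f) = 0 := by
      intro s hs
      rw [hf]
      exact coeff_act_zero p F _ (actL_N p F s (Finset.ne_of_mem_erase hs)) j hj _ e he
    have hzeta : coeff e (act p F !![0, 1; -1, 0] f) = 0 := by
      rw [hf]
      exact coeff_act_zero p F _ (actEta_N p F) j hj _ e he
    rw [Finset.sum_eq_zero hz, hzeta, add_zero, add_zero]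
  set dd := Finsupp.single (3 : Fin 4) (p * j) + Finsupp.single 2 c2 + Finsupp.single 1 1
    with hdd
  have hdd0 : dd 0 = 0 := by simp [hdd, Finsupp.single_apply]
  have hdd1 : dd 1 = 1 := by simp [hdd, Finsupp.single_apply]
  have hdd2 : dd 2 = c2 := by simp [hdd, Finsupp.single_apply]
  have hdd3 : dd 3 = p * j := by simp [hdd, Finsupp.single_apply]
  have hble : b0 ≤ dd := by
    rw [Finsupp.le_def]
    intro i
    fin_cases i <;> simp [hdd, hb0, Finsupp.single_apply, hc2eq]
  have hsubdd : dd - b0 = Finsupp.single 3 (p * j) := by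
    ext i
    fin_cases i <;>
      simp [hdd, hb0, Finsupp.tsub_apply, Finsupp.single_apply, hc2eq]
  have hcoefd : coeff dd (trBG p F f) = c := by
    rw [hcoeff_tr dd hdd0, hcf dd hdd0 (le_of_eq hdd1), if_pos hble, hsubdd, hNcoeff,
      if_pos rfl, mul_one]
  unfold LeadMonomialIs grevlexLt
  refine ⟨by rw [hcoefd]; exact hcne, ?_⟩
  intro e hes hne
  have hesum : (∑ i : Fin 4, e i) = p * j + (p - 2 + E) := by
    have hdeg : e.degree = p * j + (p - 2 + E) := by
      by_contra hcon
      exact (MvPolynomial.mem_support_iff.mp hes) (htr.coeff_eq_zero hcon)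
    rw [← hdeg]
    exact (Finset.sum_subset (Finset.subset_univ e.support) fun i _ hni =>
      Finsupp.notMem_support_iff.mp hni).symm
  have hdsum : (∑ i : Fin 4, dd i) = p * j + (p - 2 + E) := by
    rw [Fin.sum_univ_four, hdd0, hdd1, hdd2, hdd3]
    omega
  refine Or.inr ⟨by rw [hesum, hdsum], ?_⟩
  rcases Nat.eq_zero_or_pos (e 0) with h0 | h0
  · have hcoe : coeff e f ≠ 0 := by
      rw [← hcoeff_tr e h0]
      exact MvPolynomial.mem_support_iff.mp hes
    rcases Nat.lt_or_ge (e 1) 2 with h1 | h1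
    · -- e 1 ≤ 1
      have hval := hcf e h0 (by omega)
      rcases Nat.eq_zero_or_pos (e 1) with h1a | h1b
      · -- e 1 = 0 : impossible
        exfalso
        apply hcoe
        rw [hval, if_neg, mul_zero]
        intro hble'
        have h1' := Finsupp.le_def.mp hble' 1
        rw [hb0] at h1'
        simp [Finsupp.single_apply] at h1'
        omega
      · -- e 1 = 1
        have h1e : e 1 = 1 := by omega
        rcases Nat.lt_trichotomy (e 2) (p - 3 + E) with h2 | h2 | h2
        · -- e 2 < p - 3 + E : impossible
          exfalso
          apply hcoe
          rw [hval, if_neg, mul_zero]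
          intro hble'
          have h2' := Finsupp.le_def.mp hble' 2
          rw [hb0] at h2'
          simp [Finsupp.single_apply] at h2'
          omega
        · -- e 2 = p - 3 + E : e = dd, contradiction
          exfalso
          apply hne
          have h3 : e 3 = p * j := by
            rw [Fin.sum_univ_four] at hesum
            omega
          ext i
          fin_cases i
          · show e 0 = dd 0
            rw [h0, hdd0]
          · show e 1 = dd 1
            rw [h1e, hdd1]
          · show e 2 = dd 2
            rw [h2, hdd2, hc2eq]
          · show e 3 = dd 3
            rw [h3, hdd3]
        · -- e 2 > p - 3 + E : lead difference at index 2
          refine ⟨2, by rw [hdd2, hc2eq]; omega, ?_⟩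
          intro i hi
          fin_cases i
          · show e 0 = dd 0
            rw [h0, hdd0]
          · show e 1 = dd 1
            rw [h1e, hdd1]
          · exact absurd hi (by decide)
          · exact absurd hi (by decide)
    · -- e 1 ≥ 2 : lead difference at index 1
      refine ⟨1, by rw [hdd1]; omega, ?_⟩
      intro i hi
      fin_cases i
      · show e 0 = dd 0
        rw [h0, hdd0]
      · exact absurd hi (by decide)
      · exact absurd hi (by decide)
      · exact absurd hi (by decide)
  · -- e 0 > 0 : lead difference at index 0
    exact ⟨0, by rw [hdd0]; omega, fun i hi => absurd hi (by simp [Fin.lt_def])⟩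

end
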